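/- Let γ ∈ (0,1), λ > 0 and δ > 0. Then the weighted half-space bubble integral satisfies ∫_{B⁺_{2δ}} y^{1-2γ} (λ/(1+λ²(y²+|x|²)))^{2-2γ} dy dx ≤ C δ^{2γ} λ^{-(2-2γ)}, where B⁺_{2δ} = {(x,y) ∈ ℝ² × (0,∞) : |x|² + y² < 4δ²} and C depends only on γ. -/

import Mathlib

/-!
Since `l / (1 + l² s) ≤ (l s)⁻¹` and, by weighted AM–GM, `y² + |x|² ≥ y^(1-γ) |x|^(1+γ)`,
the integrand is at most `l^(-(2-2γ)) |x|^(-(2-2γ²)) y^(2γ(1-γ)-1)`. Both factors are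
locally integrable (`|x|^(-α)` on `ℝ²` for `α < 2`, `y^β` for `β > -1`), and integrating
their product over the cylinder `B_R × (0, R) ⊇ B⁺_R` gives a multiple of
`R^(2γ²) R^(2γ(1-γ)) = R^(2γ)`.
-/

open MeasureTheory Set Metric Module

theorem integral_Ioo_rpow {β R : ℝ} (hβ : -1 < β) (hR : 0 ≤ R) :
    ∫ y in Ioo 0 R, y ^ β = R ^ (β + 1) / (β + 1) := by
  rw [← integral_Ioc_eq_integral_Ioo, ← intervalIntegral.integral_of_le hR,
    integral_rpow (Or.inl hβ), Real.zero_rpow (by linarith), sub_zero]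

section NormRpow

variable {E : Type*} [NormedAddCommGroup E] [NormedSpace ℝ E] [FiniteDimensional ℝ E]
  [MeasurableSpace E] [BorelSpace E] [Nontrivial E] (μ : Measure E) [μ.IsAddHaarMeasure]
  {α R : ℝ}

theorem integrableOn_ball_norm_rpow (hα : α < finrank ℝ E) :
    IntegrableOn (fun x : E ↦ ‖x‖ ^ (-α)) (ball 0 R) μ :=
  integrableOn_ball_of_norm_le_rpow (Nat.one_le_iff_ne_zero.2 finrank_pos.ne') hα
    (C := 1) (ae_of_all _ fun x ↦ by simp [abs_of_nonneg (Real.rpow_nonneg (norm_nonneg x) _)])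
    (measurable_norm.pow_const _).aestronglyMeasurable

theorem integral_ball_norm_rpow (hα : α < finrank ℝ E) (hR : 0 ≤ R) :
    ∫ x in ball 0 R, ‖x‖ ^ (-α) ∂μ
      = finrank ℝ E * μ.real (ball 0 1) * (R ^ (finrank ℝ E - α) / (finrank ℝ E - α)) := by
  have hball : ∀ x : E, (ball 0 R).indicator (fun x ↦ ‖x‖ ^ (-α)) x
      = (Iio R).indicator (fun r ↦ r ^ (-α)) ‖x‖ := fun x ↦ by
    simp [indicator]
  have hradial : ∀ y ∈ Ioi (0 : ℝ),
      y ^ (finrank ℝ E - 1) • (Iio R).indicator (fun r ↦ r ^ (-α)) y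
        = (Iio R).indicator (fun r ↦ r ^ ((finrank ℝ E : ℝ) - 1 - α)) y := fun y hy ↦ by
    simp only [indicator, smul_eq_mul]
    split_ifs
    · rw [← Real.rpow_natCast, Nat.cast_sub (finrank_pos (R := ℝ) (M := E)), Nat.cast_one,
        ← Real.rpow_add hy, ← sub_eq_add_neg]
    · rw [mul_zero]
  rw [← integral_indicator measurableSet_ball, funext hball, integral_fun_norm_addHaar,
    setIntegral_congr_fun measurableSet_Ioi hradial, integral_indicator measurableSet_Iio,
    Measure.restrict_restrict measurableSet_Iio, Iio_inter_Ioi,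
    integral_Ioo_rpow (by linarith) hR]
  simp only [nsmul_eq_mul, smul_eq_mul]
  ring_nf

theorem integrableOn_ball_prod_Ioo_norm_rpow_mul_rpow {β : ℝ} (hα : α < finrank ℝ E)
    (hβ : -1 < β) (hR : 0 < R) :
    IntegrableOn (fun p : E × ℝ ↦ ‖p.1‖ ^ (-α) * p.2 ^ β) (ball 0 R ×ˢ Ioo 0 R)
      (μ.prod volume) := by
  rw [IntegrableOn, ← Measure.prod_restrict]
  exact (integrableOn_ball_norm_rpow μ hα).mul_prod
    ((intervalIntegral.integrableOn_Ioo_rpow_iff hR).2 hβ)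

theorem integral_ball_prod_Ioo_norm_rpow_mul_rpow {β : ℝ} (hα : α < finrank ℝ E)
    (hβ : -1 < β) (hR : 0 ≤ R) :
    ∫ p in ball 0 R ×ˢ Ioo 0 R, ‖p.1‖ ^ (-α) * p.2 ^ β ∂(μ.prod volume)
      = finrank ℝ E * μ.real (ball 0 1) * (R ^ (finrank ℝ E - α) / (finrank ℝ E - α))
        * (R ^ (β + 1) / (β + 1)) := by
  rw [setIntegral_prod_mul (fun x : E ↦ ‖x‖ ^ (-α)) (fun y : ℝ ↦ y ^ β),
    integral_ball_norm_rpow μ hα hR, integral_Ioo_rpow hβ hR]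

end NormRpow

theorem setIntegral_le_setIntegral_of_subset {X : Type*} [MeasurableSpace X] {μ : Measure X}
    {f g : X → ℝ} {s t : Set X} (hst : s ⊆ t) (hf : 0 ≤ᵐ[μ.restrict s] f)
    (hfg : f ≤ᵐ[μ.restrict s] g) (hg : IntegrableOn g t μ) (hg₀ : 0 ≤ᵐ[μ.restrict t] g) :
    ∫ x in s, f x ∂μ ≤ ∫ x in t, g x ∂μ :=
  (integral_mono_of_nonneg hf (hg.mono_set hst) hfg).trans
    (setIntegral_mono_set hg hg₀ hst.eventuallyLE)

theorem div_one_add_sq_mul_le_inv {l s : ℝ} (hl : 0 < l) (hs : 0 < s) :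
    l / (1 + l ^ 2 * s) ≤ (l * s)⁻¹ := by
  rw [inv_eq_one_div, div_le_div_iff₀ (by positivity) (by positivity)]
  nlinarith

theorem rpow_mul_rpow_le_add {p q θ : ℝ} (hp : 0 ≤ p) (hq : 0 ≤ q) (hθ₀ : 0 ≤ θ)
    (hθ₁ : θ ≤ 1) : p ^ θ * q ^ (1 - θ) ≤ p + q :=
  (Real.geom_mean_le_arith_mean2_weighted hθ₀ (by linarith) hp hq (by ring)).trans
    (by nlinarith)

theorem rpow_mul_bubble_le {a c θ l r y : ℝ} (hc : 0 ≤ c) (hθ₀ : 0 ≤ θ) (hθ₁ : θ ≤ 1)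
    (hl : 0 < l) (hr : 0 < r) (hy : 0 < y) :
    y ^ a * (l / (1 + l ^ 2 * (y ^ 2 + r ^ 2))) ^ c
      ≤ l ^ (-c) * (r ^ (-(2 * (1 - θ) * c)) * y ^ (a - 2 * θ * c)) := by
  set s := y ^ 2 + r ^ 2
  have hs : 0 < s := by positivity
  have hbubble : (l / (1 + l ^ 2 * s)) ^ c ≤ l ^ (-c) * s ^ (-c) := by
    rw [← Real.mul_rpow hl.le hs.le, Real.rpow_neg (by positivity),
      ← Real.inv_rpow (by positivity)]
    exact Real.rpow_le_rpow (by positivity) (div_one_add_sq_mul_le_inv hl hs) hc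
  have hsq : ∀ t : ℝ, 0 < t → ∀ θ : ℝ, (t ^ 2) ^ θ = t ^ (2 * θ) := fun t ht θ ↦ by
    rw [← Real.rpow_natCast, ← Real.rpow_mul ht.le, Nat.cast_ofNat]
  have hamgm : y ^ (2 * θ) * r ^ (2 * (1 - θ)) ≤ s := by
    simpa only [hsq y hy, hsq r hr] using
      rpow_mul_rpow_le_add (sq_nonneg y) (sq_nonneg r) hθ₀ hθ₁
  have hmono : s ^ (-c) ≤ y ^ (-(2 * θ * c)) * r ^ (-(2 * (1 - θ) * c)) := by
    calc s ^ (-c) ≤ (y ^ (2 * θ) * r ^ (2 * (1 - θ))) ^ (-c) :=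
          Real.rpow_le_rpow_of_nonpos (by positivity) hamgm (neg_nonpos.2 hc)
      _ = _ := by
          rw [Real.mul_rpow (by positivity) (by positivity), ← Real.rpow_mul hy.le,
            ← Real.rpow_mul hr.le, mul_neg, mul_neg]
  calc y ^ a * (l / (1 + l ^ 2 * s)) ^ c
      ≤ y ^ a * (l ^ (-c) * (y ^ (-(2 * θ * c)) * r ^ (-(2 * (1 - θ) * c)))) := by
        gcongr
        exact hbubble.trans (by gcongr)
    _ = l ^ (-c) * (r ^ (-(2 * (1 - θ) * c)) * (y ^ a * y ^ (-(2 * θ * c)))) := by ring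
    _ = _ := by rw [← Real.rpow_add hy, ← sub_eq_add_neg]

def halfBall {E : Type*} [Norm E] (R : ℝ) : Set (E × ℝ) :=
  {p | ‖p.1‖ ^ 2 + p.2 ^ 2 < R ^ 2 ∧ 0 < p.2}

theorem halfBall_subset_ball_prod_Ioo {E : Type*} [SeminormedAddCommGroup E] {R : ℝ}
    (hR : 0 < R) : halfBall R ⊆ ball (0 : E) R ×ˢ Ioo 0 R := by
  rintro ⟨x, y⟩ ⟨hxy, hy⟩
  refine ⟨mem_ball_zero_iff.2 ?_, hy, ?_⟩ <;> nlinarith [norm_nonneg x]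

theorem measurableSet_halfBall {E : Type*} [NormedAddCommGroup E] [MeasurableSpace E]
    [BorelSpace E] (R : ℝ) : MeasurableSet (halfBall (E := E) R) :=
  measurableSet_setOfPred.2 (by fun_prop)

section HalfBall

variable {E : Type*} [NormedAddCommGroup E] [NormedSpace ℝ E] [FiniteDimensional ℝ E]
  [MeasurableSpace E] [BorelSpace E] [Nontrivial E] (μ : Measure E) [μ.IsAddHaarMeasure]

theorem integral_halfBall_bubble_le {γ l R : ℝ} (hγ : γ ∈ Ioo 0 1) (hE : 2 ≤ finrank ℝ E)
    (hl : 0 < l) (hR : 0 < R) :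
    ∫ p in halfBall R,
        p.2 ^ (1 - 2 * γ) * (l / (1 + l ^ 2 * (p.2 ^ 2 + ‖p.1‖ ^ 2))) ^ (2 - 2 * γ)
          ∂(μ.prod volume)
      ≤ finrank ℝ E * μ.real (ball 0 1) / ((finrank ℝ E - 2 + 2 * γ ^ 2) * (2 * γ * (1 - γ)))
        * R ^ (finrank ℝ E - 2 + 2 * γ) * l ^ (-(2 - 2 * γ)) := by
  obtain ⟨hγ₀, hγ₁⟩ := hγ
  set α := 2 * (1 - (1 - γ) / 2) * (2 - 2 * γ)
  set β := 1 - 2 * γ - 2 * ((1 - γ) / 2) * (2 - 2 * γ)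
  have hd : (2 : ℝ) ≤ finrank ℝ E := by exact_mod_cast hE
  have hα : α < finrank ℝ E := by simp only [α]; nlinarith
  have hβ : -1 < β := by simp only [β]; nlinarith
  have hx : ∀ᵐ p : E × ℝ ∂(μ.prod volume), p.1 ≠ 0 :=
    Measure.quasiMeasurePreserving_fst.ae (Measure.ae_ne μ 0)
  calc _ ≤ ∫ p in ball 0 R ×ˢ Ioo 0 R, l ^ (-(2 - 2 * γ)) * (‖p.1‖ ^ (-α) * p.2 ^ β)
          ∂(μ.prod volume) := by
        refine setIntegral_le_setIntegral_of_subset (halfBall_subset_ball_prod_Ioo hR) ?_ ?_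
          ((integrableOn_ball_prod_Ioo_norm_rpow_mul_rpow μ hα hβ hR).const_mul _) ?_
        · filter_upwards [ae_restrict_mem (measurableSet_halfBall R)] with p hp
          exact mul_nonneg (Real.rpow_nonneg hp.2.le _) (Real.rpow_nonneg (by positivity) _)
        · filter_upwards [ae_restrict_mem (measurableSet_halfBall R), ae_restrict_of_ae hx]
            with p hp hp₁
          exact rpow_mul_bubble_le (by linarith) (by linarith) (by linarith) hl
            (norm_pos_iff.2 hp₁) hp.2
        · filter_upwards [ae_restrict_mem (measurableSet_ball.prod measurableSet_Ioo)] with p hp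
          exact mul_nonneg (Real.rpow_nonneg hl.le _)
            (mul_nonneg (Real.rpow_nonneg (norm_nonneg _) _) (Real.rpow_nonneg hp.2.1.le _))
    _ = _ := by
        rw [integral_const_mul, integral_ball_prod_Ioo_norm_rpow_mul_rpow μ hα hβ hR.le,
          show (finrank ℝ E : ℝ) - α = finrank ℝ E - 2 + 2 * γ ^ 2 by simp only [α]; ring,
          show β + 1 = 2 * γ * (1 - γ) by simp only [β]; ring,
          show (finrank ℝ E : ℝ) - 2 + 2 * γ
            = (finrank ℝ E - 2 + 2 * γ ^ 2) + 2 * γ * (1 - γ) by ring,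
          Real.rpow_add hR (finrank ℝ E - 2 + 2 * γ ^ 2)]
        field_simp

end HalfBall

theorem stmt6 (γ : ℝ) (hγ : γ ∈ Set.Ioo (0 : ℝ) 1) :
    ∃ C > (0 : ℝ), ∀ l δ : ℝ, 0 < l → 0 < δ →
      (∫ p in {p : EuclideanSpace ℝ (Fin 2) × ℝ | ‖p.1‖ ^ 2 + p.2 ^ 2 < (2 * δ) ^ 2 ∧ 0 < p.2},
          p.2 ^ (1 - 2 * γ) * (l / (1 + l ^ 2 * (p.2 ^ 2 + ‖p.1‖ ^ 2))) ^ (2 - 2 * γ))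
        ≤ C * δ ^ (2 * γ) * l ^ (-(2 - 2 * γ)) := by
  have hdim : finrank ℝ (EuclideanSpace ℝ (Fin 2)) = 2 := finrank_euclideanSpace_fin
  have hball : 0 < volume.real (ball (0 : EuclideanSpace ℝ (Fin 2)) 1) :=
    ENNReal.toReal_pos (measure_ball_pos _ _ one_pos).ne' measure_ball_lt_top.ne
  have : 0 < γ := hγ.1
  have : 0 < 1 - γ := sub_pos.2 hγ.2
  refine ⟨2 * volume.real (ball (0 : EuclideanSpace ℝ (Fin 2)) 1)
    / (2 * γ ^ 2 * (2 * γ * (1 - γ))) * 2 ^ (2 * γ), by positivity, fun l δ hl hδ ↦ ?_⟩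
  have h := integral_halfBall_bubble_le volume hγ hdim.ge hl (by positivity : 0 < 2 * δ)
  rw [← Measure.volume_eq_prod, hdim, Nat.cast_ofNat, Real.mul_rpow zero_le_two hδ.le] at h
  simp only [sub_self, zero_add] at h
  exact h.trans_eq (by ring)
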